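/- arXiv:math/0701599 — 6 statements merged into one kernel-verified Lean document; each statement's English description precedes it below -/
import Mathlib

section
/- Uniform Gronwall Lemma: Let t₀ ∈ ℝ and let r, a₁, a₂, a₃ be positive real numbers. Let g, h, y : ℝ → ℝ be nonnegative functions that are locally integrable on [t₀, ∞), such that y is differentiable on (t₀, ∞) with y'(t) ≤ g(t)·y(t) + h(t) for all t > t₀, and such that for every t ≥ t₀ one has ∫_t^{t+r} g(s) ds ≤ a₁, ∫_t^{t+r} h(s) ds ≤ a₂, and ∫_t^{t+r} y(s) ds ≤ a₃. Then y(t + r) ≤ (a₃/r + a₂)·exp(a₁) for every t ≥ t₀. -/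
/-!
Choose `s ∈ (t, t + r]` with `y s` at most the average `a₃ / r` of `y` over `[t, t + r]`; then the
integral Gronwall inequality `y b ≤ exp (∫ₐᵇ g) * (y a + ∫ₐᵇ h)` on `[s, t + r]` gives the bound.
As `g` is merely integrable, `exp (-∫ g)` is no integrating factor in the pointwise sense, so
Gronwall's inequality is proved by discretization instead: on a piece where `∫ g ≤ ε` one has
`(1 - ε) * y b ≤ y a + ∫ h`, and cutting `[a, b]` into `n` pieces with `ε = (∫ₐᵇ g) / n` yields
`(1 - ε) ^ n * y b ≤ y a + ∫ₐᵇ h`, where `(1 - ε) ^ n → exp (-∫ₐᵇ g)`.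
-/

open MeasureTheory Set Filter Topology intervalIntegral

lemma MeasureTheory.IntegrableOn.intervalIntegrable_of_Icc_subset {f : ℝ → ℝ} {a b c d : ℝ}
    (hf : IntegrableOn f (Icc a b)) (hac : a ≤ c) (hcd : c ≤ d) (hdb : d ≤ b) :
    IntervalIntegrable f volume c d :=
  (intervalIntegrable_iff_integrableOn_Icc_of_le hcd).2 (hf.mono_set (Icc_subset_Icc hac hdb))

lemma intervalIntegral_le_of_subinterval {f : ℝ → ℝ} {a b c d : ℝ} (hca : c ≤ a) (hab : a ≤ b)
    (hbd : b ≤ d) (hf : ∀ x ∈ Icc c d, 0 ≤ f x) (hfi : IntegrableOn f (Icc c d)) :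
    ∫ x in a..b, f x ≤ ∫ x in c..d, f x :=
  integral_mono_interval hca hab hbd
    ((ae_restrict_iff' measurableSet_Ioc).2 (ae_of_all _ fun x hx => hf x (Ioc_subset_Icc_self hx)))
    (hfi.intervalIntegrable_of_Icc_subset le_rfl (hca.trans (hab.trans hbd)) le_rfl)

lemma exists_mem_Ioc_le_integral_div {f : ℝ → ℝ} {a b : ℝ} (hab : a < b)
    (hf : IntegrableOn f (Icc a b)) : ∃ x ∈ Ioc a b, f x ≤ (∫ x in a..b, f x) / (b - a) := by
  have hmean := interval_average_eq_div f a b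
  rw [uIoc_of_le hab.le] at hmean
  rw [← hmean]
  exact exists_le_setAverage (by simp [hab]) (by simp) (hf.mono_set Ioc_subset_Icc_self)

lemma integral_add_adjacent_of_integrableOn {f : ℝ → ℝ} {a b w : ℝ}
    (hf : IntegrableOn f (Icc a b)) (hw : w ∈ Icc a b) :
    (∫ x in a..w, f x) + ∫ x in w..b, f x = ∫ x in a..b, f x :=
  integral_add_adjacent_intervals (hf.intervalIntegrable_of_Icc_subset le_rfl hw.1 hw.2)
    (hf.intervalIntegrable_of_Icc_subset hw.1 hw.2 le_rfl)

lemma exists_integral_le_and_integral_le {g : ℝ → ℝ} {a b ε δ : ℝ} (hab : a ≤ b)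
    (hg : IntegrableOn g (Icc a b)) (hε : 0 ≤ ε) (hδ : 0 ≤ δ)
    (hεδ : ∫ x in a..b, g x ≤ ε + δ) :
    ∃ w ∈ Icc a b, ∫ x in a..w, g x ≤ ε ∧ ∫ x in w..b, g x ≤ δ := by
  by_cases hgε : ∫ x in a..b, g x ≤ ε
  · exact ⟨b, right_mem_Icc.2 hab, hgε, by simpa using hδ⟩
  have hcont : ContinuousOn (fun w => ∫ x in a..w, g x) (Icc a b) := by
    have := continuousOn_primitive_interval (μ := volume) (f := g) (a := a) (b := b)
    rw [uIcc_of_le hab] at this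
    exact this hg
  obtain ⟨w, hw, hGw⟩ := intermediate_value_Icc hab hcont ⟨by simpa using hε, (not_le.1 hgε).le⟩
  refine ⟨w, hw, hGw.le, ?_⟩
  have hsplit := integral_add_adjacent_of_integrableOn hg hw
  simp only at hGw
  rw [hGw] at hsplit
  linarith

structure IsGronwallSubsolution (g h y y' : ℝ → ℝ) (a b : ℝ) : Prop where
  continuousOn : ContinuousOn y (Icc a b)
  hasDerivWithinAt : ∀ x ∈ Ioo a b, HasDerivWithinAt y (y' x) (Ioi x) x
  deriv_le : ∀ x ∈ Ioo a b, y' x ≤ g x * y x + h x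
  integrableOn_g : IntegrableOn g (Icc a b)
  integrableOn_h : IntegrableOn h (Icc a b)
  g_nonneg : ∀ x ∈ Icc a b, 0 ≤ g x
  h_nonneg : ∀ x ∈ Icc a b, 0 ≤ h x
  y_nonneg : ∀ x ∈ Icc a b, 0 ≤ y x

namespace IsGronwallSubsolution

variable {g h y y' : ℝ → ℝ} {a b : ℝ}

lemma mono (H : IsGronwallSubsolution g h y y' a b) {c d : ℝ} (hac : a ≤ c) (hdb : d ≤ b) :
    IsGronwallSubsolution g h y y' c d where
  continuousOn := H.continuousOn.mono (Icc_subset_Icc hac hdb)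
  hasDerivWithinAt x hx := H.hasDerivWithinAt x (Ioo_subset_Ioo hac hdb hx)
  deriv_le x hx := H.deriv_le x (Ioo_subset_Ioo hac hdb hx)
  integrableOn_g := H.integrableOn_g.mono_set (Icc_subset_Icc hac hdb)
  integrableOn_h := H.integrableOn_h.mono_set (Icc_subset_Icc hac hdb)
  g_nonneg x hx := H.g_nonneg x (Icc_subset_Icc hac hdb hx)
  h_nonneg x hx := H.h_nonneg x (Icc_subset_Icc hac hdb hx)
  y_nonneg x hx := H.y_nonneg x (Icc_subset_Icc hac hdb hx)

lemma sub_le_integral_mul_add (H : IsGronwallSubsolution g h y y' a b) (hab : a ≤ b) :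
    y b - y a ≤ (∫ x in a..b, g x * y x) + ∫ x in a..b, h x := by
  have hgy : IntegrableOn (fun x => g x * y x) (Icc a b) :=
    H.integrableOn_g.mul_continuousOn H.continuousOn isCompact_Icc
  rw [← integral_add (hgy.intervalIntegrable_of_Icc_subset le_rfl hab le_rfl)
    (H.integrableOn_h.intervalIntegrable_of_Icc_subset le_rfl hab le_rfl)]
  exact sub_le_integral_of_hasDeriv_right_of_le hab H.continuousOn H.hasDerivWithinAt
    (hgy.add H.integrableOn_h) H.deriv_le

/-- Evaluating the integral inequality at a maximum point `m` of `y` on `[a, b]` bounds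
`∫ g y` by `y m * ∫ g`, which is absorbed into the left-hand side. -/
lemma one_sub_mul_le (H : IsGronwallSubsolution g h y y' a b) (hab : a ≤ b) {c : ℝ}
    (hg : ∫ x in a..b, g x ≤ c) (hc : c ≤ 1) :
    (1 - c) * y b ≤ y a + ∫ x in a..b, h x := by
  obtain ⟨m, hm, hmax⟩ := isCompact_Icc.exists_isMaxOn (nonempty_Icc.2 hab) H.continuousOn
  have Hm := H.mono le_rfl hm.2
  have hym : 0 ≤ y m := H.y_nonneg m hm
  have hgy : ∫ x in a..m, g x * y x ≤ y m * ∫ x in a..m, g x := by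
    rw [← intervalIntegral.integral_const_mul]
    refine integral_mono_on hm.1 ?_ ?_ fun x hx => ?_
    · exact (Hm.integrableOn_g.mul_continuousOn Hm.continuousOn isCompact_Icc
        ).intervalIntegrable_of_Icc_subset le_rfl hm.1 le_rfl
    · exact (Hm.integrableOn_g.intervalIntegrable_of_Icc_subset le_rfl hm.1 le_rfl).const_mul _
    · rw [mul_comm (y m)]
      exact mul_le_mul_of_nonneg_left (hmax (Icc_subset_Icc le_rfl hm.2 hx)) (Hm.g_nonneg x hx)
  have hgm : ∫ x in a..m, g x ≤ c := (intervalIntegral_le_of_subinterval le_rfl hm.1 hm.2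
    H.g_nonneg H.integrableOn_g).trans hg
  have hhm : ∫ x in a..m, h x ≤ ∫ x in a..b, h x :=
    intervalIntegral_le_of_subinterval le_rfl hm.1 hm.2 H.h_nonneg H.integrableOn_h
  have hyb : y b ≤ y m := hmax (right_mem_Icc.2 hab)
  have := Hm.sub_le_integral_mul_add hm.1
  nlinarith [mul_le_mul_of_nonneg_left hgm hym]

lemma one_sub_pow_mul_le (H : IsGronwallSubsolution g h y y' a b) (hab : a ≤ b) {ε : ℝ}
    (hε : 0 ≤ ε) (hε1 : ε ≤ 1) (n : ℕ) (hg : ∫ x in a..b, g x ≤ n * ε) :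
    (1 - ε) ^ n * y b ≤ y a + ∫ x in a..b, h x := by
  induction n generalizing a with
  | zero => simpa using H.one_sub_mul_le hab (by simpa using hg) zero_le_one
  | succ n ih =>
    obtain ⟨w, hw, hgaw, hgwb⟩ := exists_integral_le_and_integral_le (δ := n * ε) hab
      H.integrableOn_g hε (by positivity) (by push_cast at hg; linarith)
    have hyw := (H.mono le_rfl hw.2).one_sub_mul_le hw.1 hgaw hε1
    have hyb := ih (H.mono hw.1 le_rfl) hw.2 hgwb
    have hhwb : 0 ≤ ∫ x in w..b, h x :=
      integral_nonneg hw.2 fun x hx => H.h_nonneg x ⟨hw.1.trans hx.1, hx.2⟩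
    have hsplit := integral_add_adjacent_of_integrableOn H.integrableOn_h hw
    calc (1 - ε) ^ (n + 1) * y b = (1 - ε) * ((1 - ε) ^ n * y b) := by ring
      _ ≤ (1 - ε) * (y w + ∫ x in w..b, h x) := by gcongr
      _ ≤ y a + ∫ x in a..b, h x := by nlinarith

theorem le_exp_integral_mul (H : IsGronwallSubsolution g h y y' a b) (hab : a ≤ b) :
    y b ≤ Real.exp (∫ x in a..b, g x) * (y a + ∫ x in a..b, h x) := by
  set G := ∫ x in a..b, g x
  have hG : 0 ≤ G := integral_nonneg hab H.g_nonneg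
  have hlim : Tendsto (fun n : ℕ => (1 - G / n) ^ n * y b) atTop (𝓝 (Real.exp (-G) * y b)) := by
    simpa [sub_eq_add_neg, neg_div] using (Real.tendsto_one_add_div_pow_exp (-G)).mul_const (y b)
  have hev : ∀ᶠ n : ℕ in atTop, (1 - G / n) ^ n * y b ≤ y a + ∫ x in a..b, h x := by
    filter_upwards [eventually_gt_atTop ⌈G⌉₊] with n hn
    have hn : G < n := (Nat.le_ceil G).trans_lt (by exact_mod_cast hn)
    have hn0 : (0 : ℝ) < n := hG.trans_lt hn
    refine H.one_sub_pow_mul_le hab (by positivity) ((div_le_one hn0).2 hn.le) n ?_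
    rw [mul_div_cancel₀ _ hn0.ne']
  have := le_of_tendsto hlim hev
  rw [Real.exp_neg, inv_mul_le_iff₀ (Real.exp_pos G)] at this
  exact this

end IsGronwallSubsolution

theorem uniform_gronwall_general
    (t₀ r a₁ a₂ a₃ : ℝ) (hr : 0 < r)
    (g h y y' : ℝ → ℝ)
    (hg_nonneg : ∀ t, t₀ ≤ t → 0 ≤ g t)
    (hh_nonneg : ∀ t, t₀ ≤ t → 0 ≤ h t)
    (hy_nonneg : ∀ t, t₀ ≤ t → 0 ≤ y t)
    (hg_loc : ∀ a b : ℝ, t₀ ≤ a → MeasureTheory.IntegrableOn g (Set.Icc a b))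
    (hh_loc : ∀ a b : ℝ, t₀ ≤ a → MeasureTheory.IntegrableOn h (Set.Icc a b))
    (hy_loc : ∀ a b : ℝ, t₀ ≤ a → MeasureTheory.IntegrableOn y (Set.Icc a b))
    (hy_deriv : ∀ t, t₀ < t → HasDerivAt y (y' t) t)
    (hy_ineq : ∀ t, t₀ < t → y' t ≤ g t * y t + h t)
    (hg_int : ∀ t, t₀ ≤ t → ∫ s in t..(t + r), g s ≤ a₁)
    (hh_int : ∀ t, t₀ ≤ t → ∫ s in t..(t + r), h s ≤ a₂)
    (hy_int : ∀ t, t₀ ≤ t → ∫ s in t..(t + r), y s ≤ a₃) :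
    ∀ t, t₀ ≤ t → y (t + r) ≤ (a₃ / r + a₂) * Real.exp a₁ := by
  intro t ht
  have htr : t < t + r := lt_add_of_pos_right t hr
  obtain ⟨s, hs, hys⟩ := exists_mem_Ioc_le_integral_div htr (hy_loc t (t + r) ht)
  have hts : t₀ < s := ht.trans_lt hs.1
  have H : IsGronwallSubsolution g h y y' s (t + r) :=
    { continuousOn := fun x hx => (hy_deriv x (hts.trans_le hx.1)).continuousAt.continuousWithinAt
      hasDerivWithinAt := fun x hx => (hy_deriv x (hts.trans hx.1)).hasDerivWithinAt
      deriv_le := fun x hx => hy_ineq x (hts.trans hx.1)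
      integrableOn_g := hg_loc s (t + r) hts.le
      integrableOn_h := hh_loc s (t + r) hts.le
      g_nonneg := fun x hx => hg_nonneg x (hts.le.trans hx.1)
      h_nonneg := fun x hx => hh_nonneg x (hts.le.trans hx.1)
      y_nonneg := fun x hx => hy_nonneg x (hts.le.trans hx.1) }
  have hg : ∫ x in s..t + r, g x ≤ a₁ := (intervalIntegral_le_of_subinterval hs.1.le hs.2 le_rfl
    (fun x hx => hg_nonneg x (ht.trans hx.1)) (hg_loc t (t + r) ht)).trans (hg_int t ht)
  have hh : ∫ x in s..t + r, h x ≤ a₂ := (intervalIntegral_le_of_subinterval hs.1.le hs.2 le_rfl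
    (fun x hx => hh_nonneg x (ht.trans hx.1)) (hh_loc t (t + r) ht)).trans (hh_int t ht)
  have hys' : y s ≤ a₃ / r := hys.trans (by
    rw [add_sub_cancel_left]; exact div_le_div_of_nonneg_right (hy_int t ht) hr.le)
  calc y (t + r) ≤ Real.exp (∫ x in s..t + r, g x) * (y s + ∫ x in s..t + r, h x) :=
        H.le_exp_integral_mul hs.2
    _ ≤ Real.exp a₁ * (a₃ / r + a₂) := by
        gcongr
        exact add_nonneg (H.y_nonneg s (left_mem_Icc.2 hs.2)) (integral_nonneg hs.2 H.h_nonneg)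
    _ = (a₃ / r + a₂) * Real.exp a₁ := mul_comm _ _

/-- **Uniform Gronwall Lemma.** Let `t₀ ∈ ℝ` and `r, a₁, a₂, a₃ > 0`. Let
`g, h, y : ℝ → ℝ` be nonnegative functions, locally integrable on `[t₀, ∞)`
(i.e. integrable on every compact subinterval of `[t₀, ∞)`), with `y`
differentiable on `(t₀, ∞)` with derivative `y'` satisfying
`y' t ≤ g t * y t + h t` for `t > t₀`, and suppose that for every `t ≥ t₀`
one has `∫_t^{t+r} g ≤ a₁`, `∫_t^{t+r} h ≤ a₂` and `∫_t^{t+r} y ≤ a₃`.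
Then `y (t + r) ≤ (a₃ / r + a₂) * exp a₁` for every `t ≥ t₀`. -/
theorem uniform_gronwall
    (t₀ r a₁ a₂ a₃ : ℝ) (hr : 0 < r)
    (ha₁ : 0 < a₁) (ha₂ : 0 < a₂) (ha₃ : 0 < a₃)
    (g h y y' : ℝ → ℝ)
    (hg_nonneg : ∀ t, t₀ ≤ t → 0 ≤ g t)
    (hh_nonneg : ∀ t, t₀ ≤ t → 0 ≤ h t)
    (hy_nonneg : ∀ t, t₀ ≤ t → 0 ≤ y t)
    (hg_loc : ∀ a b : ℝ, t₀ ≤ a → MeasureTheory.IntegrableOn g (Set.Icc a b))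
    (hh_loc : ∀ a b : ℝ, t₀ ≤ a → MeasureTheory.IntegrableOn h (Set.Icc a b))
    (hy_loc : ∀ a b : ℝ, t₀ ≤ a → MeasureTheory.IntegrableOn y (Set.Icc a b))
    (hy_deriv : ∀ t, t₀ < t → HasDerivAt y (y' t) t)
    (hy_ineq : ∀ t, t₀ < t → y' t ≤ g t * y t + h t)
    (hg_int : ∀ t, t₀ ≤ t → ∫ s in t..(t + r), g s ≤ a₁)
    (hh_int : ∀ t, t₀ ≤ t → ∫ s in t..(t + r), h s ≤ a₂)
    (hy_int : ∀ t, t₀ ≤ t → ∫ s in t..(t + r), y s ≤ a₃) :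
    ∀ t, t₀ ≤ t → y (t + r) ≤ (a₃ / r + a₂) * Real.exp a₁ :=
  uniform_gronwall_general t₀ r a₁ a₂ a₃ hr g h y y' hg_nonneg hh_nonneg hy_nonneg hg_loc hh_loc
    hy_loc hy_deriv hy_ineq hg_int hh_int hy_int
end

section
/- For every continuously differentiable function f : [0,1] → ℝ one has ∫₀¹ |f(ξ)|³ dξ ≤ 9 ∫₀¹ |f(ξ)| f'(ξ)² dξ + 2 |f(1)|³. -/
/-!
Write `g = f³`, so that `g' = 3 f² f'`. By the fundamental theorem of calculus every value
`|g ξ|` is at most `|g 1| + ∫₀¹ |g'|`, and integrating gives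
`∫ |f|³ ≤ |f 1|³ + 3 ∫ f² |f'|`. Young's inequality
`3 x² |y| ≤ |x|³ / 2 + 9 |x| y² / 2` bounds the last integral by half of the left-hand side
plus `9/2 ∫ |f| f'²`, and absorbing that half proves the claim.
-/

open Set intervalIntegral Filter MeasureTheory.MeasureSpace

section TraceBound

variable {g g' : ℝ → ℝ} {a b : ℝ}

theorem abs_le_abs_right_add_integral_abs_deriv
    (hg : ∀ x ∈ Icc a b, HasDerivWithinAt g (g' x) (Icc a b) x)
    (hg' : IntervalIntegrable g' volume a b) {ξ : ℝ} (hξ : ξ ∈ Icc a b) :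
    |g ξ| ≤ |g b| + ∫ t in a..b, |g' t| := by
  obtain ⟨haξ, hξb⟩ := hξ
  have hsub : Icc ξ b ⊆ Icc a b := Icc_subset_Icc_left haξ
  have hftc : ∫ t in ξ..b, g' t = g b - g ξ :=
    integral_eq_sub_of_hasDeriv_right_of_le hξb
      (fun x hx => (hg x (hsub hx)).continuousWithinAt.mono hsub)
      (fun x hx => ((hg x (hsub (Ioo_subset_Icc_self hx))).hasDerivAt
        (Icc_mem_nhds (haξ.trans_lt hx.1) hx.2)).hasDerivWithinAt)
      (hg'.mono_set (by rwa [uIcc_of_le hξb, uIcc_of_le (haξ.trans hξb)]))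
  calc |g ξ| = |g b - ∫ t in ξ..b, g' t| := by rw [hftc, sub_sub_cancel]
    _ ≤ |g b| + |∫ t in ξ..b, g' t| := abs_sub _ _
    _ ≤ |g b| + ∫ t in ξ..b, |g' t| := by gcongr; exact abs_integral_le_integral_abs hξb
    _ ≤ |g b| + ∫ t in a..b, |g' t| := by
        gcongr
        exact integral_mono_interval haξ hξb le_rfl
          (Eventually.of_forall fun _ => abs_nonneg _) hg'.abs

theorem integral_abs_le_mul_abs_right_add_integral_abs_deriv (hab : a ≤ b)
    (hg : ∀ x ∈ Icc a b, HasDerivWithinAt g (g' x) (Icc a b) x)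
    (hg' : IntervalIntegrable g' volume a b) :
    ∫ x in a..b, |g x| ≤ (b - a) * (|g b| + ∫ t in a..b, |g' t|) := by
  have hgc : ContinuousOn g (Icc a b) := fun x hx => (hg x hx).continuousWithinAt
  calc ∫ x in a..b, |g x| ≤ ∫ _ in a..b, (|g b| + ∫ t in a..b, |g' t|) :=
        integral_mono_on hab (hgc.abs.intervalIntegrable_of_Icc hab) intervalIntegrable_const
          fun ξ hξ => abs_le_abs_right_add_integral_abs_deriv hg hg' hξ
    _ = (b - a) * (|g b| + ∫ t in a..b, |g' t|) := by rw [integral_const, smul_eq_mul]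

end TraceBound

theorem three_mul_sq_mul_abs_le (x y : ℝ) :
    3 * x ^ 2 * |y| ≤ 1 / 2 * |x| ^ 3 + 9 / 2 * (|x| * y ^ 2) := by
  have h : 0 ≤ |x| * (|x| - 3 * |y|) ^ 2 := by positivity
  rw [← sq_abs x, ← sq_abs y]
  nlinarith

/-- For every continuously differentiable function `f : [0,1] → ℝ` one has
`∫₀¹ |f(ξ)|³ dξ ≤ 9 ∫₀¹ |f(ξ)| f'(ξ)² dξ + 2 |f(1)|³`. -/
theorem trace_poincare_cube
    (f f' : ℝ → ℝ)
    (hf : ∀ x ∈ Set.Icc (0 : ℝ) 1, HasDerivWithinAt f (f' x) (Set.Icc 0 1) x)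
    (hf' : ContinuousOn f' (Set.Icc (0 : ℝ) 1)) :
    (∫ ξ in (0 : ℝ)..1, |f ξ| ^ 3) ≤
      9 * (∫ ξ in (0 : ℝ)..1, |f ξ| * (f' ξ) ^ 2) + 2 * |f 1| ^ 3 := by
  have hfc : ContinuousOn f (Icc 0 1) := fun x hx => (hf x hx).continuousWithinAt
  have hcube : ∀ x ∈ Icc (0 : ℝ) 1,
      HasDerivWithinAt (fun x => f x ^ 3) (3 * f x ^ 2 * f' x) (Icc 0 1) x := fun x hx => by
    simpa using (hf x hx).fun_pow 3
  have hint : ∀ {h : ℝ → ℝ}, ContinuousOn h (Icc 0 1) → IntervalIntegrable h volume 0 1 :=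
    fun hc => hc.intervalIntegrable_of_Icc zero_le_one
  have trace : ∫ ξ in (0 : ℝ)..1, |f ξ| ^ 3 ≤
      |f 1| ^ 3 + ∫ t in (0 : ℝ)..1, 3 * f t ^ 2 * |f' t| := by
    simpa [abs_pow, abs_mul] using integral_abs_le_mul_abs_right_add_integral_abs_deriv
      zero_le_one hcube (hint (by fun_prop))
  have young : ∫ t in (0 : ℝ)..1, 3 * f t ^ 2 * |f' t| ≤
      1 / 2 * (∫ ξ in (0 : ℝ)..1, |f ξ| ^ 3) +
        9 / 2 * ∫ ξ in (0 : ℝ)..1, |f ξ| * f' ξ ^ 2 := by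
    rw [← integral_const_mul, ← integral_const_mul,
      ← integral_add (hint (by fun_prop)) (hint (by fun_prop))]
    exact integral_mono_on zero_le_one (hint (by fun_prop)) (hint (by fun_prop))
      fun t _ => three_mul_sq_mul_abs_le (f t) (f' t)
  linarith
end

section
/- For every continuously differentiable function f : [0,1] → ℝ one has ∫₀¹ f(ξ)⁴ dξ ≤ 16 ∫₀¹ f(ξ)² f'(ξ)² dξ + 2 f(1)⁴. -/
/-!
Write `g = f⁴`, so `g' = 4 f³ f'`. By the fundamental theorem of calculus every value `g ξ` is at
most `g 1 + ∫₀¹ |g'|`, and Young's inequality `|4 f³ f'| ≤ f⁴ / 2 + 8 f² f'²` bounds the total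
variation by `½ ∫₀¹ f⁴ + 8 ∫₀¹ f² f'²`. Integrating in `ξ` and absorbing the term `½ ∫₀¹ f⁴`
into the left-hand side gives the constants `16` and `2`.
-/

open MeasureTheory Set intervalIntegral

theorem abs_four_mul_pow_three_mul_le (a b : ℝ) :
    |4 * a ^ 3 * b| ≤ a ^ 4 / 2 + 8 * (a ^ 2 * b ^ 2) := by
  rw [abs_le]
  constructor <;> nlinarith [sq_nonneg (a ^ 2 - 4 * a * b), sq_nonneg (a ^ 2 + 4 * a * b)]

section TotalVariation

variable {g g' : ℝ → ℝ} {a b : ℝ}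

theorem continuousOn_of_forall_hasDerivWithinAt
    (hg : ∀ x ∈ Icc a b, HasDerivWithinAt g (g' x) (Icc a b) x) : ContinuousOn g (Icc a b) :=
  fun x hx => (hg x hx).continuousWithinAt

theorem integral_deriv_eq_sub_of_hasDerivWithinAt_Icc {ξ : ℝ} (hξ : ξ ∈ Icc a b)
    (hg : ∀ x ∈ Icc a b, HasDerivWithinAt g (g' x) (Icc a b) x)
    (hg' : IntervalIntegrable g' volume a b) :
    ∫ x in ξ..b, g' x = g b - g ξ := by
  have hsub : Icc ξ b ⊆ Icc a b := Icc_subset_Icc_left hξ.1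
  refine integral_eq_sub_of_hasDerivAt_of_le hξ.2
    ((continuousOn_of_forall_hasDerivWithinAt hg).mono hsub)
    (fun x hx => (hg x (hsub (Ioo_subset_Icc_self hx))).hasDerivAt
      (Icc_mem_nhds (hξ.1.trans_lt hx.1) hx.2)) ?_
  exact hg'.mono_set (by rw [uIcc_of_le hξ.2, uIcc_of_le (hξ.1.trans hξ.2)]; exact hsub)

theorem le_add_integral_abs_deriv_of_hasDerivWithinAt_Icc {ξ : ℝ} (hξ : ξ ∈ Icc a b)
    (hg : ∀ x ∈ Icc a b, HasDerivWithinAt g (g' x) (Icc a b) x)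
    (hg' : IntervalIntegrable g' volume a b) :
    g ξ ≤ g b + ∫ x in a..b, |g' x| :=
  calc g ξ = g b - ∫ x in ξ..b, g' x := by
        rw [integral_deriv_eq_sub_of_hasDerivWithinAt_Icc hξ hg hg', sub_sub_cancel]
    _ ≤ g b + |∫ x in ξ..b, g' x| := by linarith [neg_abs_le (∫ x in ξ..b, g' x)]
    _ ≤ g b + ∫ x in ξ..b, |g' x| := by gcongr; exact abs_integral_le_integral_abs hξ.2
    _ ≤ g b + ∫ x in a..b, |g' x| := by
        gcongr
        exact integral_mono_interval hξ.1 hξ.2 le_rfl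
          (Filter.Eventually.of_forall fun x => abs_nonneg (g' x)) hg'.abs

theorem integral_le_mul_add_integral_abs_deriv_of_hasDerivWithinAt_Icc (hab : a ≤ b)
    (hg : ∀ x ∈ Icc a b, HasDerivWithinAt g (g' x) (Icc a b) x)
    (hg' : IntervalIntegrable g' volume a b) :
    ∫ x in a..b, g x ≤ (b - a) * (g b + ∫ x in a..b, |g' x|) := by
  have hgc : ContinuousOn g (uIcc a b) := by
    rw [uIcc_of_le hab]; exact continuousOn_of_forall_hasDerivWithinAt hg
  calc ∫ x in a..b, g x ≤ ∫ _ in a..b, (g b + ∫ x in a..b, |g' x|) :=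
        integral_mono_on hab hgc.intervalIntegrable intervalIntegrable_const
          fun ξ hξ => le_add_integral_abs_deriv_of_hasDerivWithinAt_Icc hξ hg hg'
    _ = (b - a) * (g b + ∫ x in a..b, |g' x|) := integral_const _

end TotalVariation

/-- For every continuously differentiable function `f : [0,1] → ℝ` one has
`∫₀¹ f(ξ)⁴ dξ ≤ 16 ∫₀¹ f(ξ)² f'(ξ)² dξ + 2 f(1)⁴`. -/
theorem trace_poincare_quartic
    (f f' : ℝ → ℝ)
    (hf : ∀ x ∈ Set.Icc (0 : ℝ) 1, HasDerivWithinAt f (f' x) (Set.Icc 0 1) x)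
    (hf' : ContinuousOn f' (Set.Icc (0 : ℝ) 1)) :
    (∫ ξ in (0 : ℝ)..1, (f ξ) ^ 4) ≤
      16 * (∫ ξ in (0 : ℝ)..1, (f ξ) ^ 2 * (f' ξ) ^ 2) + 2 * (f 1) ^ 4 := by
  have hIcc : uIcc (0 : ℝ) 1 = Icc 0 1 := uIcc_of_le zero_le_one
  have hfc : ContinuousOn f (uIcc 0 1) := hIcc ▸ continuousOn_of_forall_hasDerivWithinAt hf
  have hf'c : ContinuousOn f' (uIcc 0 1) := hIcc ▸ hf'
  have hg : ∀ x ∈ Icc (0 : ℝ) 1,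
      HasDerivWithinAt (fun x => f x ^ 4) (4 * f x ^ 3 * f' x) (Icc 0 1) x := fun x hx => by
    simpa using (hf x hx).fun_pow 4
  have hg' : IntervalIntegrable (fun x => 4 * f x ^ 3 * f' x) volume 0 1 :=
    ((continuousOn_const.mul (hfc.pow 3)).mul hf'c).intervalIntegrable
  have hI4 : IntervalIntegrable (fun x => f x ^ 4 / 2) volume 0 1 :=
    ((hfc.pow 4).div_const 2).intervalIntegrable
  have hI22 : IntervalIntegrable (fun x => 8 * (f x ^ 2 * f' x ^ 2)) volume 0 1 :=
    (continuousOn_const.mul ((hfc.pow 2).mul (hf'c.pow 2))).intervalIntegrable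
  have hvariation : ∫ x in (0 : ℝ)..1, |4 * f x ^ 3 * f' x| ≤
      (∫ x in (0 : ℝ)..1, f x ^ 4) / 2 + 8 * ∫ x in (0 : ℝ)..1, f x ^ 2 * f' x ^ 2 := by
    rw [← intervalIntegral.integral_div, ← intervalIntegral.integral_const_mul,
      ← integral_add hI4 hI22]
    exact integral_mono_on zero_le_one hg'.abs (hI4.add hI22)
      fun x _ => abs_four_mul_pow_three_mul_le (f x) (f' x)
  have hbound := integral_le_mul_add_integral_abs_deriv_of_hasDerivWithinAt_Icc zero_le_one hg hg'
  simp only [sub_zero, one_mul] at hbound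
  linarith
end

section
/- Let H be a real separable Hilbert space and let S(t), t ≥ 0, be a semigroup of maps of H satisfying assumptions (i) and (ii) below, with absorbing ball B_ρ and weak universal attractor A = ⋂_{s ≥ 0} cl_w(⋃_{t ≥ s} S(t) B_ρ). Then A is nonempty, A ⊆ B_ρ (in particular A is bounded), and A is closed in the weak topology of H; consequently A is compact in the weak topology of H. -/
/-- The weak topology on a real normed space `H`: the initial (coarsest) topology
making every continuous linear functional `f : H →L[ℝ] ℝ` continuous. -/
def weakTopology (H : Type*) [NormedAddCommGroup H] [NormedSpace ℝ H] :
    TopologicalSpace H :=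
  ⨅ f : H →L[ℝ] ℝ, TopologicalSpace.induced (f : H → ℝ) inferInstance

/-!
The attractor is the ω-limit set of `B_ρ` along `t → ∞` for the weak topology. Since `B_ρ` is
absorbing, all of the sets `S t '' B_ρ` with `t ≥ t₀(B_ρ)` lie in `B_ρ`, which is weakly closed and,
by the Riesz representation and Banach–Alaoglu theorems, weakly compact. The ω-limit set of a
nonempty set that is eventually carried into a compact closed set is a nonempty closed subset of it.
-/

open Set Filter Topology InnerProductSpace

section OmegaLimit

variable {τ α β ι : Type*} [TopologicalSpace β] {f : Filter τ} (ϕ : τ → α → β) (s : Set α)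

theorem Filter.HasBasis.omegaLimit_eq {p : ι → Prop} {u : ι → Set τ} (hf : f.HasBasis p u) :
    omegaLimit f ϕ s = ⋂ (i) (_ : p i), closure (image2 ϕ (u i) s) :=
  Subset.antisymm (iInter₂_mono' fun i hi ↦ ⟨u i, hf.mem_of_mem hi, Subset.rfl⟩)
    (iInter₂_mono' fun _ hv ↦
      let ⟨i, hi, hiv⟩ := hf.mem_iff.1 hv
      ⟨i, hi, closure_mono (image2_subset hiv Subset.rfl)⟩)

theorem omegaLimit_atTop_eq_biInter_Ici [Preorder τ] [IsDirected τ (· ≤ ·)] (a : τ) :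
    omegaLimit atTop ϕ s = ⋂ b ∈ Ici a, closure (⋃ t ∈ Ici b, ϕ t '' s) := by
  rw [(atTop_basis' a).omegaLimit_eq]
  simp_rw [iUnion_image_left]
  rfl

theorem closure_image2_subset_of_mapsTo {u : Set τ} {c : Set β} (hc : IsClosed c)
    (h : ∀ t ∈ u, MapsTo (ϕ t) s c) : closure (image2 ϕ u s) ⊆ c :=
  closure_minimal (image2_subset_iff.2 fun t ht _ hx ↦ h t ht hx) hc

end OmegaLimit

section WeakTopology

variable {H : Type*} [NormedAddCommGroup H] [InnerProductSpace ℝ H]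

theorem ContinuousLinearMap.continuous_weakTopology (g : H →L[ℝ] ℝ) :
    Continuous[weakTopology H, _] g :=
  continuous_iInf_dom continuous_induced_dom

theorem closedBall_zero_eq_iInter_inner_le {ρ : ℝ} (hρ : 0 ≤ ρ) :
    Metric.closedBall (0 : H) ρ = ⋂ y : H, {x | inner ℝ y x ≤ ρ * ‖y‖} := by
  ext x
  simp only [Metric.mem_closedBall, dist_zero_right, mem_iInter, mem_ofPred_eq]
  refine ⟨fun hx y ↦ ?_, fun h ↦ ?_⟩
  · calc inner ℝ y x ≤ ‖y‖ * ‖x‖ := real_inner_le_norm y x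
      _ ≤ ρ * ‖y‖ := by nlinarith [norm_nonneg x, norm_nonneg y]
  · have hx := h x
    rw [real_inner_self_eq_norm_sq] at hx
    nlinarith [norm_nonneg x]

theorem isClosed_closedBall_weakTopology {ρ : ℝ} (hρ : 0 ≤ ρ) :
    IsClosed[weakTopology H] (Metric.closedBall (0 : H) ρ) := by
  rw [closedBall_zero_eq_iInter_inner_le hρ]
  exact @isClosed_iInter _ _ (weakTopology H) _ fun y ↦
    @IsClosed.preimage _ _ (weakTopology H) _ _ (innerSL ℝ y).continuous_weakTopology _ isClosed_Iic

variable [CompleteSpace H]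

noncomputable def rieszOfWeakDual : WeakDual ℝ H → H :=
  (toDual ℝ H).symm ∘ WeakDual.toStrongDual

theorem continuous_rieszOfWeakDual : Continuous[_, weakTopology H] (rieszOfWeakDual (H := H)) := by
  refine continuous_iInf_rng.2 fun g ↦ continuous_induced_rng.2 ?_
  have : (g ∘ rieszOfWeakDual) = fun φ : WeakDual ℝ H ↦ φ ((toDual ℝ H).symm g) := by
    ext φ
    rw [Function.comp_apply, ← toDual_symm_apply, real_inner_comm, rieszOfWeakDual,
      Function.comp_apply, toDual_symm_apply]
    rfl
  rw [this]
  exact WeakDual.eval_continuous _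

theorem isCompact_closedBall_weakTopology (ρ : ℝ) :
    @IsCompact H (weakTopology H) (Metric.closedBall 0 ρ) := by
  have himage : rieszOfWeakDual '' (WeakDual.toStrongDual ⁻¹' Metric.closedBall 0 ρ) =
      Metric.closedBall (0 : H) ρ := by
    rw [rieszOfWeakDual, image_comp, image_preimage_eq _ WeakDual.toStrongDual.surjective,
      LinearIsometryEquiv.image_closedBall, map_zero]
  rw [← himage]
  exact @IsCompact.image _ _ _ (weakTopology H) _ _ (WeakDual.isCompact_closedBall 0 ρ)
    continuous_rieszOfWeakDual

end WeakTopology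

theorem weak_universal_attractor_nonempty_bounded_weaklyCompact_general
    {H : Type*} [NormedAddCommGroup H] [InnerProductSpace ℝ H] [CompleteSpace H]
    (S : ℝ → H → H)
    (ρ : ℝ) (hρ : 0 < ρ)
    (habs : ∀ B : Set H, Bornology.IsBounded B →
      ∃ t₀ : ℝ, 0 ≤ t₀ ∧ ∀ t : ℝ, t₀ ≤ t → S t '' B ⊆ Metric.closedBall 0 ρ)
    (A : Set H)
    (hA : A = ⋂ s ∈ Set.Ici (0 : ℝ),
      @closure H (weakTopology H) (⋃ t ∈ Set.Ici s, S t '' Metric.closedBall 0 ρ)) :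
    A.Nonempty ∧ A ⊆ Metric.closedBall 0 ρ ∧
      @IsClosed H (weakTopology H) A ∧ @IsCompact H (weakTopology H) A := by
  let := weakTopology H
  set B := Metric.closedBall (0 : H) ρ
  rw [← omegaLimit_atTop_eq_biInter_Ici] at hA
  subst hA
  obtain ⟨t₀, -, ht₀⟩ := habs B Metric.isBounded_closedBall
  have hB : closure (image2 S (Ici t₀) B) ⊆ B :=
    closure_image2_subset_of_mapsTo S B (isClosed_closedBall_weakTopology hρ.le)
      fun t ht ↦ mapsTo_iff_image_subset.2 (ht₀ t ht)
  have hAB : omegaLimit atTop S B ⊆ B :=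
    (omegaLimit_subset_closure_image2 _ _ _ (Ici_mem_atTop t₀)).trans hB
  exact ⟨nonempty_omegaLimit_of_isCompact_absorbing _ _ _ (isCompact_closedBall_weakTopology ρ)
      ⟨Ici t₀, Ici_mem_atTop t₀, hB⟩ (Metric.nonempty_closedBall.2 hρ.le),
    hAB, isClosed_omegaLimit _ _ _,
    (isCompact_closedBall_weakTopology ρ).of_isClosed_subset (isClosed_omegaLimit _ _ _) hAB⟩

/-- Let `H` be a real separable Hilbert space and `S t`, `t ≥ 0`, a semigroup of
maps of `H` such that each `S t` is sequentially weakly continuous, admitting an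
absorbing closed ball `B_ρ`.  Then the weak universal attractor
`A = ⋂_{s ≥ 0} cl_w (⋃_{t ≥ s} S t '' B_ρ)` is nonempty, contained in `B_ρ`
(in particular bounded), weakly closed, and weakly compact. -/
theorem weak_universal_attractor_nonempty_bounded_weaklyCompact
    {H : Type*} [NormedAddCommGroup H] [InnerProductSpace ℝ H] [CompleteSpace H]
    [TopologicalSpace.SeparableSpace H]
    (S : ℝ → H → H)
    (hS0 : S 0 = id)
    (hSadd : ∀ s t : ℝ, 0 ≤ s → 0 ≤ t → S (t + s) = S t ∘ S s)
    (hSweak : ∀ t : ℝ, 0 ≤ t → ∀ (u : ℕ → H) (x : H),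
      Filter.Tendsto u Filter.atTop (@nhds H (weakTopology H) x) →
      Filter.Tendsto (fun n => S t (u n)) Filter.atTop (@nhds H (weakTopology H) (S t x)))
    (ρ : ℝ) (hρ : 0 < ρ)
    (habs : ∀ B : Set H, Bornology.IsBounded B →
      ∃ t₀ : ℝ, 0 ≤ t₀ ∧ ∀ t : ℝ, t₀ ≤ t → S t '' B ⊆ Metric.closedBall 0 ρ)
    (A : Set H)
    (hA : A = ⋂ s ∈ Set.Ici (0 : ℝ),
      @closure H (weakTopology H) (⋃ t ∈ Set.Ici s, S t '' Metric.closedBall 0 ρ)) :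
    A.Nonempty ∧ A ⊆ Metric.closedBall 0 ρ ∧
      @IsClosed H (weakTopology H) A ∧ @IsCompact H (weakTopology H) A :=
  weak_universal_attractor_nonempty_bounded_weaklyCompact_general S ρ hρ habs A hA
end

section
/- Let H be a real separable Hilbert space and let S(t), t ≥ 0, be a semigroup of maps of H satisfying assumptions (i) and (ii) below, with absorbing ball B_ρ and weak universal attractor A = ⋂_{s ≥ 0} cl_w(⋃_{t ≥ s} S(t) B_ρ). Then A is invariant under the semigroup: S(t) A = A for every t ≥ 0. -/
open Topology Set

section Attractor

variable {X : Type*} (S : ℝ → X → X) (K : Set X)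

def tailOrbit (s : ℝ) : Set X := ⋃ τ ∈ Ici s, S τ '' K

def attractor [TopologicalSpace X] : Set X := ⋂ s ∈ Ici (0 : ℝ), closure (tailOrbit S K s)

variable {S K}

theorem tailOrbit_antitone : Antitone (tailOrbit S K) := fun _ _ hst =>
  biUnion_subset_biUnion_left fun _ hτ => le_trans hst hτ

theorem tailOrbit_subset {t₀ s : ℝ} (habs : ∀ τ, t₀ ≤ τ → S τ '' K ⊆ K) (hs : t₀ ≤ s) :
    tailOrbit S K s ⊆ K :=
  iUnion₂_subset fun τ hτ => habs τ (hs.trans hτ)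

theorem image_tailOrbit (hSadd : ∀ s t : ℝ, 0 ≤ s → 0 ≤ t → S (t + s) = S t ∘ S s)
    {s t : ℝ} (hs : 0 ≤ s) (ht : 0 ≤ t) :
    S t '' tailOrbit S K s = tailOrbit S K (s + t) := by
  simp only [tailOrbit, image_iUnion₂, image_image]
  apply subset_antisymm
  · refine iUnion₂_subset fun τ (hτ : s ≤ τ) => ?_
    rintro _ ⟨v, hv, rfl⟩
    refine mem_biUnion (x := t + τ) (show s + t ≤ t + τ by linarith) ⟨v, hv, ?_⟩
    rw [hSadd τ t (hs.trans hτ) ht, Function.comp_apply]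
  · refine iUnion₂_subset fun τ (hτ : s + t ≤ τ) => ?_
    rintro _ ⟨v, hv, rfl⟩
    refine mem_biUnion (x := τ - t) (show s ≤ τ - t by linarith) ⟨v, hv, ?_⟩
    dsimp only
    rw [← Function.comp_apply (f := S t), ← hSadd _ _ (by linarith) ht, add_sub_cancel]

variable [TopologicalSpace X]

theorem mem_attractor_iff {x : X} :
    x ∈ attractor S K ↔ ∀ s, 0 ≤ s → x ∈ closure (tailOrbit S K s) := by
  simp [attractor]

theorem image_attractor_subset (hSadd : ∀ s t : ℝ, 0 ≤ s → 0 ≤ t → S (t + s) = S t ∘ S s)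
    {t₀ t : ℝ} (habs : ∀ τ, t₀ ≤ τ → S τ '' K ⊆ K) (hK : IsClosed K) (ht : 0 ≤ t)
    (hcont : ContinuousOn (S t) K) : S t '' attractor S K ⊆ attractor S K := by
  rintro _ ⟨x, hx, rfl⟩
  refine mem_attractor_iff.2 fun s hs => ?_
  set s' := max s t₀
  have hs' : 0 ≤ s' := hs.trans (le_max_left _ _)
  have hclos : closure (tailOrbit S K s') ⊆ K :=
    closure_minimal (tailOrbit_subset habs (le_max_right _ _)) hK
  have hmaps : S t '' closure (tailOrbit S K s') ⊆ closure (tailOrbit S K s) :=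
    calc S t '' closure (tailOrbit S K s')
      _ ⊆ closure (S t '' tailOrbit S K s') := (hcont.mono hclos).image_closure
      _ = closure (tailOrbit S K (s' + t)) := by rw [image_tailOrbit hSadd hs' ht]
      _ ⊆ closure (tailOrbit S K s) :=
        closure_mono (tailOrbit_antitone (by linarith [le_max_left s t₀]))
  exact hmaps (mem_image_of_mem _ (mem_attractor_iff.1 hx s' hs'))

theorem subset_image_attractor [T2Space X]
    (hSadd : ∀ s t : ℝ, 0 ≤ s → 0 ≤ t → S (t + s) = S t ∘ S s)
    {t₀ t : ℝ} (ht₀ : 0 ≤ t₀) (habs : ∀ τ, t₀ ≤ τ → S τ '' K ⊆ K) (hK : IsCompact K) (ht : 0 ≤ t)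
    (hcont : ContinuousOn (S t) K) : attractor S K ⊆ S t '' attractor S K := by
  intro x hx
  let tail (s : ℝ) : Set X := closure (tailOrbit S K (max s t₀))
  have htail_subset s : tail s ⊆ K :=
    closure_minimal (tailOrbit_subset habs (le_max_right _ _)) hK.isClosed
  have htail_compact s : IsCompact (tail s) :=
    hK.of_isClosed_subset isClosed_closure (htail_subset s)
  have hx_image s : x ∈ S t '' tail s := by
    have hclosed : IsClosed (S t '' tail s) :=
      ((htail_compact s).image_of_continuousOn (hcont.mono (htail_subset s))).isClosed
    have hx' : x ∈ closure (S t '' tailOrbit S K (max s t₀)) := by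
      rw [image_tailOrbit hSadd (ht₀.trans (le_max_right _ _)) ht]
      exact mem_attractor_iff.1 hx _ (by positivity)
    exact hclosed.closure_subset_iff.2 (image_mono subset_closure) hx'
  let fiber (s : ℝ) : Set X := tail s ∩ S t ⁻¹' {x}
  have hfiber_closed s : IsClosed (fiber s) :=
    (hcont.mono (htail_subset s)).preimage_isClosed_of_isClosed isClosed_closure isClosed_singleton
  have hfiber_nonempty s : (fiber s).Nonempty :=
    let ⟨y, hy, hyx⟩ := hx_image s; ⟨y, hy, hyx⟩
  have hfiber_antitone : Antitone fiber := fun a b hab =>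
    inter_subset_inter_left _ (closure_mono (tailOrbit_antitone (max_le_max_right t₀ hab)))
  obtain ⟨y, hy⟩ : (⋂ s, fiber s).Nonempty :=
    IsCompact.nonempty_iInter_of_directed_nonempty_isCompact_isClosed fiber
      hfiber_antitone.directed_ge hfiber_nonempty
      (fun s => (htail_compact s).of_isClosed_subset (hfiber_closed s) inter_subset_left)
      hfiber_closed
  rw [mem_iInter] at hy
  refine ⟨y, mem_attractor_iff.2 fun s _ => ?_, (hy 0).2⟩
  exact closure_mono (tailOrbit_antitone (le_max_left s t₀)) (hy s).1

theorem image_attractor_eq [T2Space X] (hSadd : ∀ s t : ℝ, 0 ≤ s → 0 ≤ t → S (t + s) = S t ∘ S s)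
    {t₀ t : ℝ} (ht₀ : 0 ≤ t₀) (habs : ∀ τ, t₀ ≤ τ → S τ '' K ⊆ K) (hK : IsCompact K) (ht : 0 ≤ t)
    (hcont : ContinuousOn (S t) K) : S t '' attractor S K = attractor S K :=
  (image_attractor_subset hSadd habs hK.isClosed ht hcont).antisymm
    (subset_image_attractor hSadd ht₀ habs hK ht hcont)

end Attractor

theorem SeqContinuous.continuousOn {X Y : Type*} [TopologicalSpace X] [TopologicalSpace Y]
    {f : X → Y} {K : Set X} [SequentialSpace K] (hf : SeqContinuous f) : ContinuousOn f K :=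
  continuousOn_iff_continuous_domRestrict.2 <| SeqContinuous.continuous fun {_ _} hu =>
    hf ((continuous_subtype_val.tendsto _).comp hu)

theorem weakTopology_eq_weakSpace (E : Type*) [NormedAddCommGroup E] [NormedSpace ℝ E] :
    weakTopology E = (inferInstance : TopologicalSpace (WeakSpace ℝ E)) := by
  change _ = TopologicalSpace.induced (fun (x : E) (f : E →L[ℝ] ℝ) => f x) Pi.topologicalSpace
  simp only [weakTopology, Pi.topologicalSpace, induced_compose, induced_iInf]
  rfl

section Hilbert

variable {H : Type*} [NormedAddCommGroup H] [InnerProductSpace ℝ H] [CompleteSpace H]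

open InnerProductSpace

theorem weakTopology_eq_induced_toDual :
    weakTopology H = .induced (fun x => StrongDual.toWeakDual (toDual ℝ H x)) inferInstance := by
  change _ = TopologicalSpace.induced _
    (.induced (fun (φ : WeakDual ℝ H) (y : H) => φ y) Pi.topologicalSpace)
  simp only [weakTopology, Pi.topologicalSpace, induced_compose, induced_iInf]
  refine le_antisymm (le_iInf fun y => iInf_le_of_le (innerSL ℝ y) (le_of_eq ?_))
    (le_iInf fun f => iInf_le_of_le ((toDual ℝ H).symm f) (le_of_eq ?_))
  · congr 1 with x
    exact real_inner_comm _ _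
  · congr 1 with x
    exact (real_inner_comm _ _).trans toDual_symm_apply

theorem isEmbedding_toWeakDual_toDual :
    IsEmbedding fun x : WeakSpace ℝ H => StrongDual.toWeakDual (toDual ℝ H x) :=
  ⟨⟨(weakTopology_eq_weakSpace H).symm.trans weakTopology_eq_induced_toDual⟩,
    StrongDual.toWeakDual.injective.comp (toDual ℝ H).injective⟩

theorem image_toWeakDual_toDual_closedBall (ρ : ℝ) :
    (fun x => StrongDual.toWeakDual (toDual ℝ H x)) '' Metric.closedBall 0 ρ =
      WeakDual.toStrongDual ⁻¹' Metric.closedBall 0 ρ := by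
  rw [← image_image (g := StrongDual.toWeakDual), LinearIsometryEquiv.image_closedBall, map_zero]
  exact StrongDual.toWeakDual.image_eq_preimage_symm _

/- The ascriptions `(Metric.closedBall (0 : H) ρ : Set H)` elaborate the ball in `H`, which carries
the metric, and then read it as a subset of the type synonym `WeakSpace ℝ H`. -/
theorem isCompact_closedBall_weakSpace (ρ : ℝ) :
    IsCompact (X := WeakSpace ℝ H) (Metric.closedBall (0 : H) ρ : Set H) := by
  have h := WeakDual.isCompact_closedBall (0 : StrongDual ℝ H) ρ
  rw [← image_toWeakDual_toDual_closedBall] at h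
  exact isEmbedding_toWeakDual_toDual.isInducing.isCompact_iff.2 h

theorem SeqContinuous.continuousOn_closedBall_weakSpace [TopologicalSpace.SeparableSpace H]
    {Y : Type*} [TopologicalSpace Y] {f : WeakSpace ℝ H → Y} (hf : SeqContinuous f) (ρ : ℝ) :
    ContinuousOn f (Metric.closedBall (0 : H) ρ : Set H) := by
  let K : Set (WeakSpace ℝ H) := (Metric.closedBall (0 : H) ρ : Set H)
  have hK := WeakDual.metrizable_of_isCompact ℝ H _
    (WeakDual.isCompact_closedBall (0 : StrongDual ℝ H) ρ)
  rw [← image_toWeakDual_toDual_closedBall] at hK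
  have : TopologicalSpace.MetrizableSpace K :=
    @IsEmbedding.metrizableSpace _ _ _ _ hK _
      (isEmbedding_toWeakDual_toDual.restrict (mapsTo_image _ K))
  exact hf.continuousOn (K := K)

end Hilbert

theorem weak_universal_attractor_invariant_general
    {H : Type*} [NormedAddCommGroup H] [InnerProductSpace ℝ H] [CompleteSpace H]
    [TopologicalSpace.SeparableSpace H]
    (S : ℝ → H → H)
    (hSadd : ∀ s t : ℝ, 0 ≤ s → 0 ≤ t → S (t + s) = S t ∘ S s)
    (hSweak : ∀ t : ℝ, 0 ≤ t → ∀ (u : ℕ → H) (x : H),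
      Filter.Tendsto u Filter.atTop (@nhds H (weakTopology H) x) →
      Filter.Tendsto (fun n => S t (u n)) Filter.atTop (@nhds H (weakTopology H) (S t x)))
    (ρ : ℝ)
    (habs : ∀ B : Set H, Bornology.IsBounded B →
      ∃ t₀ : ℝ, 0 ≤ t₀ ∧ ∀ t : ℝ, t₀ ≤ t → S t '' B ⊆ Metric.closedBall 0 ρ)
    (A : Set H)
    (hA : A = ⋂ s ∈ Set.Ici (0 : ℝ),
      @closure H (weakTopology H) (⋃ t ∈ Set.Ici s, S t '' Metric.closedBall 0 ρ)) :
    ∀ t : ℝ, 0 ≤ t → S t '' A = A := by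
  intro t ht
  obtain ⟨t₀, ht₀, hball⟩ := habs _ Metric.isBounded_closedBall
  rw [weakTopology_eq_weakSpace] at hSweak hA
  subst hA
  have hseq : SeqContinuous (X := WeakSpace ℝ H) (Y := WeakSpace ℝ H) (S t) :=
    fun {_ _} h => hSweak t ht _ _ h
  exact image_attractor_eq (X := WeakSpace ℝ H) hSadd ht₀ hball (isCompact_closedBall_weakSpace ρ)
    ht (hseq.continuousOn_closedBall_weakSpace ρ)

/-- Let `H` be a real separable Hilbert space and `S t`, `t ≥ 0`, a semigroup of
maps of `H` such that each `S t` is sequentially weakly continuous, admitting an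
absorbing closed ball `B_ρ`.  Then the weak universal attractor
`A = ⋂_{s ≥ 0} cl_w (⋃_{t ≥ s} S t '' B_ρ)` is invariant under the semigroup:
`S t '' A = A` for every `t ≥ 0`. -/
theorem weak_universal_attractor_invariant
    {H : Type*} [NormedAddCommGroup H] [InnerProductSpace ℝ H] [CompleteSpace H]
    [TopologicalSpace.SeparableSpace H]
    (S : ℝ → H → H)
    (hS0 : S 0 = id)
    (hSadd : ∀ s t : ℝ, 0 ≤ s → 0 ≤ t → S (t + s) = S t ∘ S s)
    (hSweak : ∀ t : ℝ, 0 ≤ t → ∀ (u : ℕ → H) (x : H),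
      Filter.Tendsto u Filter.atTop (@nhds H (weakTopology H) x) →
      Filter.Tendsto (fun n => S t (u n)) Filter.atTop (@nhds H (weakTopology H) (S t x)))
    (ρ : ℝ) (hρ : 0 < ρ)
    (habs : ∀ B : Set H, Bornology.IsBounded B →
      ∃ t₀ : ℝ, 0 ≤ t₀ ∧ ∀ t : ℝ, t₀ ≤ t → S t '' B ⊆ Metric.closedBall 0 ρ)
    (A : Set H)
    (hA : A = ⋂ s ∈ Set.Ici (0 : ℝ),
      @closure H (weakTopology H) (⋃ t ∈ Set.Ici s, S t '' Metric.closedBall 0 ρ)) :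
    ∀ t : ℝ, 0 ≤ t → S t '' A = A :=
  weak_universal_attractor_invariant_general S hSadd hSweak ρ habs A hA
end

section
/- Let H be a real separable Hilbert space and let S(t), t ≥ 0, be a semigroup of maps of H satisfying assumptions (i) and (ii) below, with absorbing ball B_ρ and weak universal attractor A = ⋂_{s ≥ 0} cl_w(⋃_{t ≥ s} S(t) B_ρ). Then A is connected as a subspace of H equipped with the weak topology. -/
/-!
Each `S t B_ρ` is weakly connected: `S t` is only sequentially weakly continuous, but the path
`θ ↦ S t (θ • u)` starts in `ℝ`, a sequential space, so it is weakly continuous, and these paths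
join every point of `S t B_ρ` to `S t 0`. Since `B_ρ` absorbs itself, `S t' B_ρ ⊆ S t B_ρ` once
`t' ≥ t + t₀`, so any two of these sets eventually share a subset and the tails
`⋃_{t ≥ s} S t B_ρ` are connected. Their weak closures form a decreasing family of connected
sets that eventually lie in the weakly compact ball (Banach–Alaoglu, transported by the Riesz
isomorphism); in the Hausdorff weak topology such an intersection is connected.
-/

open Set Metric Topology

section Connected

variable {X : Type*} [TopologicalSpace X] [T2Space X]

theorem isPreconnected_iInter_of_directed {ι : Type*} [Nonempty ι] {K : ι → Set X}
    (hdir : Directed (· ⊇ ·) K) (hK : ∀ i, IsCompact (K i)) (hKc : ∀ i, IsPreconnected (K i)) :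
    IsPreconnected (⋂ i, K i) := by
  set I := ⋂ i, K i
  have hI : IsCompact I := by
    obtain ⟨i⟩ := ‹Nonempty ι›
    exact (hK i).of_isClosed_subset (isClosed_iInter fun i => (hK i).isClosed) (iInter_subset K i)
  rw [isPreconnected_closed_iff]
  intro t t' ht ht' hcover ⟨x, hxI, hxt⟩ ⟨y, hyI, hyt'⟩
  by_contra hempty
  have hdisj : Disjoint (I ∩ t) (I ∩ t') := by
    rw [disjoint_iff_inter_eq_empty, inter_inter_inter_comm, inter_self]
    exact not_nonempty_iff_eq_empty.mp hempty
  obtain ⟨U, V, hU, hV, htU, ht'V, hUV⟩ :=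
    SeparatedNhds.of_isCompact_isCompact (hI.inter_right ht) (hI.inter_right ht') hdisj
  obtain ⟨i, hiUV⟩ : ∃ i, K i ⊆ U ∪ V := exists_subset_nhds_of_isCompact hdir hK fun z hz =>
    (hU.union hV).mem_nhds <| (hcover hz).imp (fun h => htU ⟨hz, h⟩) (fun h => ht'V ⟨hz, h⟩)
  rcases (hKc i).subset_or_subset hU hV hUV hiUV with hKU | hKV
  · exact disjoint_left.mp hUV (hKU (iInter_subset K i hyI)) (ht'V ⟨hyI, hyt'⟩)
  · exact disjoint_left.mp hUV (htU ⟨hxI, hxt⟩) (hKV (iInter_subset K i hxI))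

theorem isConnected_iInter_of_directed {ι : Type*} [Nonempty ι] {K : ι → Set X}
    (hdir : Directed (· ⊇ ·) K) (hK : ∀ i, IsCompact (K i)) (hKc : ∀ i, IsConnected (K i)) :
    IsConnected (⋂ i, K i) :=
  ⟨IsCompact.nonempty_iInter_of_directed_nonempty_isCompact_isClosed K hdir
      (fun i => (hKc i).nonempty) hK fun i => (hK i).isClosed,
    isPreconnected_iInter_of_directed hdir hK fun i => (hKc i).isPreconnected⟩

end Connected

section EventuallyNested

variable {X : Type*} [TopologicalSpace X] {F : ℝ → Set X} {t₀ : ℝ}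

theorem isConnected_biUnion_Ici_of_eventually_nested (hF : ∀ t ≥ 0, IsConnected (F t))
    (hnest : ∀ t ≥ 0, ∀ t' ≥ t + t₀, F t' ⊆ F t) {s : ℝ} (hs : 0 ≤ s) :
    IsConnected (⋃ t ∈ Ici s, F t) := by
  refine IsConnected.biUnion_of_reflTransGen nonempty_Ici (fun t ht => hF t (hs.trans ht))
    fun t ht t' ht' => Relation.ReflTransGen.single ⟨?_, ht⟩
  have ht0 : 0 ≤ t := hs.trans ht
  have ht'0 : 0 ≤ t' := hs.trans ht'
  set T := max t t' + |t₀|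
  obtain ⟨z, hz⟩ := (hF T (by positivity)).nonempty
  exact ⟨z, hnest t ht0 T (by linarith [le_max_left t t', le_abs_self t₀]) hz,
    hnest t' ht'0 T (by linarith [le_max_right t t', le_abs_self t₀]) hz⟩

theorem isConnected_biInter_closure_biUnion_Ici [T2Space X] {C : Set X} (hC : IsCompact C)
    (hFC : ∀ t ≥ t₀, F t ⊆ C) (hF : ∀ t ≥ 0, IsConnected (F t))
    (hnest : ∀ t ≥ 0, ∀ t' ≥ t + t₀, F t' ⊆ F t) :
    IsConnected (⋂ s ∈ Ici (0 : ℝ), closure (⋃ t ∈ Ici s, F t)) := by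
  set K : ℝ → Set X := fun s => closure (⋃ t ∈ Ici s, F t)
  have hK : Antitone K := fun s s' h =>
    closure_mono <| biUnion_subset_biUnion_left <| Ici_subset_Ici.mpr h
  set a := max 0 t₀
  have hinter : ⋂ s ∈ Ici (0 : ℝ), K s = ⋂ s, K (max s a) := by
    refine Subset.antisymm (subset_iInter fun s => biInter_subset_of_mem ?_) ?_
    · exact (le_max_left 0 t₀).trans (le_max_right s a)
    · exact subset_iInter₂ fun s _ => (iInter_subset _ s).trans (hK (le_max_left s a))
  rw [hinter]
  refine isConnected_iInter_of_directed
    (hK.comp_monotone fun s s' h => max_le_max h le_rfl).directed_ge (fun s => ?_) fun s =>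
      (isConnected_biUnion_Ici_of_eventually_nested hF hnest
        ((le_max_left 0 t₀).trans (le_max_right s a))).closure
  refine hC.of_isClosed_subset isClosed_closure (closure_minimal ?_ hC.isClosed)
  exact iUnion₂_subset fun t ht =>
    hFC t (((le_max_right 0 t₀).trans (le_max_right s a)).trans ht)

end EventuallyNested

section WeakTopology

variable {H : Type*} [NormedAddCommGroup H]

section NormedSpace

variable [NormedSpace ℝ H]

theorem le_weakTopology : (inferInstance : TopologicalSpace H) ≤ weakTopology H :=
  le_iInf fun f => continuous_iff_le_induced.mp f.continuous

theorem continuous_weakTopology_clm (f : H →L[ℝ] ℝ) :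
    Continuous[weakTopology H, inferInstance] f :=
  continuous_iInf_dom continuous_induced_dom

theorem continuous_weakTopology_rng_iff {X : Type*} [TopologicalSpace X] {g : X → H} :
    Continuous[_, weakTopology H] g ↔ ∀ f : H →L[ℝ] ℝ, Continuous (f ∘ g) := by
  unfold weakTopology
  rw [continuous_iInf_rng]
  exact forall_congr' fun f => continuous_induced_rng

theorem t2Space_weakTopology [SeparatingDual ℝ H] : @T2Space H (weakTopology H) :=
  @T2Space.of_injective_continuous H ((H →L[ℝ] ℝ) → ℝ) (weakTopology H) _ _ (fun x f => f x)
    (fun _ _ h => by_contra fun hne =>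
      (SeparatingDual.exists_separating_of_ne (R := ℝ) hne).elim fun f hf => hf (congrFun h f))
    (@continuous_pi H _ _ (weakTopology H) _ _ continuous_weakTopology_clm)

theorem StarConvex.isPreconnected_image_of_weakSeqContinuous {Y : Type*}
    [TopologicalSpace Y] {x : H} {s : Set H} (hs : StarConvex ℝ x s) {g : H → Y}
    (hg : @SeqContinuous H Y (weakTopology H) _ g) : IsPreconnected (g '' s) := by
  refine isPreconnected_of_forall (g x) ?_
  rintro _ ⟨y, hy, rfl⟩
  set γ : ℝ → H := fun θ => x + θ • (y - x)
  have hγ : Continuous[_, weakTopology H] γ :=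
    continuous_le_rng le_weakTopology (by fun_prop)
  have hgγ : Continuous (g ∘ γ) := SeqContinuous.continuous fun _ _ hθ =>
    hg (@Continuous.seqContinuous _ _ _ (weakTopology H) _ hγ _ _ hθ)
  refine ⟨(g ∘ γ) '' Icc 0 1, ?_, ⟨0, left_mem_Icc.mpr zero_le_one, by simp [γ]⟩,
    ⟨1, right_mem_Icc.mpr zero_le_one, by simp [γ]⟩, isPreconnected_Icc.image _ hgγ.continuousOn⟩
  rintro _ ⟨θ, hθ, rfl⟩
  exact mem_image_of_mem g (hs.add_smul_sub_mem hy hθ.1 hθ.2)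

end NormedSpace

open InnerProductSpace RealInnerProductSpace in
theorem isCompact_weakTopology_closedBall [InnerProductSpace ℝ H] [CompleteSpace H]
    (x : H) (r : ℝ) : @IsCompact H (weakTopology H) (closedBall x r) := by
  let ψ : WeakDual ℝ H → H := (toDual ℝ H).symm ∘ WeakDual.toStrongDual
  have hψ : Continuous[_, weakTopology H] ψ := by
    refine continuous_weakTopology_rng_iff.mpr fun f => ?_
    have hfψ : f ∘ ψ = fun φ => φ ((toDual ℝ H).symm f) := by
      ext φ
      calc f (ψ φ) = ⟪(toDual ℝ H).symm f, ψ φ⟫_ℝ := toDual_symm_apply.symm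
        _ = ⟪ψ φ, (toDual ℝ H).symm f⟫_ℝ := real_inner_comm _ _
        _ = φ ((toDual ℝ H).symm f) := toDual_symm_apply
    rw [hfψ]
    exact WeakDual.eval_continuous _
  have hψB : ψ '' (WeakDual.toStrongDual ⁻¹' closedBall (toDual ℝ H x) r) = closedBall x r := by
    rw [image_comp, image_preimage_eq _ WeakDual.toStrongDual.surjective,
      LinearIsometryEquiv.image_eq_preimage_symm, LinearIsometryEquiv.symm_symm,
      (toDual ℝ H).isometry.preimage_closedBall]
  exact hψB ▸ @IsCompact.image _ _ _ (weakTopology H) _ _ (WeakDual.isCompact_closedBall _ _) hψ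

end WeakTopology

theorem image_subset_image_of_semigroup_absorbing {α : Type*} {S : ℝ → α → α}
    (hSadd : ∀ s t : ℝ, 0 ≤ s → 0 ≤ t → S (t + s) = S t ∘ S s) {B : Set α} {t₀ : ℝ}
    (ht₀ : 0 ≤ t₀) (hB : ∀ t ≥ t₀, S t '' B ⊆ B) :
    ∀ t ≥ 0, ∀ t' ≥ t + t₀, S t' '' B ⊆ S t '' B := by
  intro t ht t' ht'
  have hdecomp : S t' = S t ∘ S (t' - t) := by
    simpa using hSadd (t' - t) t (by linarith) ht
  rw [hdecomp, image_comp]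
  exact image_mono (hB (t' - t) (by linarith))

theorem weak_universal_attractor_connected_general
    {H : Type*} [NormedAddCommGroup H] [InnerProductSpace ℝ H] [CompleteSpace H]
    (S : ℝ → H → H)
    (hSadd : ∀ s t : ℝ, 0 ≤ s → 0 ≤ t → S (t + s) = S t ∘ S s)
    (hSweak : ∀ t : ℝ, 0 ≤ t → ∀ (u : ℕ → H) (x : H),
      Filter.Tendsto u Filter.atTop (@nhds H (weakTopology H) x) →
      Filter.Tendsto (fun n => S t (u n)) Filter.atTop (@nhds H (weakTopology H) (S t x)))
    (ρ : ℝ) (hρ : 0 < ρ)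
    (habs : ∀ B : Set H, Bornology.IsBounded B →
      ∃ t₀ : ℝ, 0 ≤ t₀ ∧ ∀ t : ℝ, t₀ ≤ t → S t '' B ⊆ Metric.closedBall 0 ρ)
    (A : Set H)
    (hA : A = ⋂ s ∈ Set.Ici (0 : ℝ),
      @closure H (weakTopology H) (⋃ t ∈ Set.Ici s, S t '' Metric.closedBall 0 ρ)) :
    @IsConnected H (weakTopology H) A := by
  obtain ⟨t₀, ht₀, hB⟩ := habs (closedBall 0 ρ) isBounded_closedBall
  have hconn : ∀ t ≥ 0, @IsConnected H (weakTopology H) (S t '' closedBall 0 ρ) := fun t ht =>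
    ⟨(nonempty_closedBall.mpr hρ.le).image _,
      @StarConvex.isPreconnected_image_of_weakSeqContinuous H _ _ H (weakTopology H) _ _
        ((convex_closedBall 0 ρ).starConvex (mem_closedBall_self hρ.le)) (S t)
        fun _ _ hu => hSweak t ht _ _ hu⟩
  subst hA
  exact @isConnected_biInter_closure_biUnion_Ici H (weakTopology H) _ t₀ t2Space_weakTopology _
    (isCompact_weakTopology_closedBall 0 ρ) hB hconn
    (image_subset_image_of_semigroup_absorbing hSadd ht₀ hB)

/-- Let `H` be a real separable Hilbert space and `S t`, `t ≥ 0`, a semigroup of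
maps of `H` such that each `S t` is sequentially weakly continuous, admitting an
absorbing closed ball `B_ρ`.  Then the weak universal attractor
`A = ⋂_{s ≥ 0} cl_w (⋃_{t ≥ s} S t '' B_ρ)` is connected as a subspace of `H`
equipped with the weak topology. -/
theorem weak_universal_attractor_connected
    {H : Type*} [NormedAddCommGroup H] [InnerProductSpace ℝ H] [CompleteSpace H]
    [TopologicalSpace.SeparableSpace H]
    (S : ℝ → H → H)
    (hS0 : S 0 = id)
    (hSadd : ∀ s t : ℝ, 0 ≤ s → 0 ≤ t → S (t + s) = S t ∘ S s)
    (hSweak : ∀ t : ℝ, 0 ≤ t → ∀ (u : ℕ → H) (x : H),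
      Filter.Tendsto u Filter.atTop (@nhds H (weakTopology H) x) →
      Filter.Tendsto (fun n => S t (u n)) Filter.atTop (@nhds H (weakTopology H) (S t x)))
    (ρ : ℝ) (hρ : 0 < ρ)
    (habs : ∀ B : Set H, Bornology.IsBounded B →
      ∃ t₀ : ℝ, 0 ≤ t₀ ∧ ∀ t : ℝ, t₀ ≤ t → S t '' B ⊆ Metric.closedBall 0 ρ)
    (A : Set H)
    (hA : A = ⋂ s ∈ Set.Ici (0 : ℝ),
      @closure H (weakTopology H) (⋃ t ∈ Set.Ici s, S t '' Metric.closedBall 0 ρ)) :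
    @IsConnected H (weakTopology H) A :=
  weak_universal_attractor_connected_general S hSadd hSweak ρ hρ habs A hA
end
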